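/- arXiv:1305.2543 — 3 statements merged into one kernel-verified Lean document; each statement's English description precedes it below -/
import Mathlib

section
/- Let l, d, k be positive integers with k dividing l, l dividing d·k, and d ≤ l. Set c = l/k and t = d·k/l. Then the number of orbits of size exactly k of the shift map σ on d-element subsets of ZMod l equals the number of orbits of size exactly k of the shift map on t-element subsets of ZMod k. -/
/-!
Pulling a subset of `ZMod k` back along the projection `ZMod l → ZMod k` multiplies its size
by `l / k`, commutes with the shift, and is injective, so it preserves minimal periods and maps
orbits onto orbits. Conversely a subset of `ZMod l` whose period divides `k` is invariant under
translation by the multiples of `k`, the kernel of the projection, hence is a pullback. Thus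
pulling back is a bijection between orbits of size `n ∣ k` on `t`-subsets of `ZMod k` and on
`t * (l / k)`-subsets of `ZMod l`.
-/

/-- The shift map on finsets of `ZMod m`. -/
def sh (m : ℕ) (A : Finset (ZMod m)) : Finset (ZMod m) := A.image (· + 1)

/-- The orbit of a finset `A` of `ZMod m` under the shift map (note `(sh m)^[m] = id`). -/
def shOrbit (m : ℕ) [NeZero m] (A : Finset (ZMod m)) : Finset (Finset (ZMod m)) :=
  (Finset.range m).image (fun i => (sh m)^[i] A)

/-- The number of orbits of size exactly `k` of the shift map on `d`-element subsets
of `ZMod m`. -/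
def norb (m d k : ℕ) [NeZero m] : ℕ :=
  (((Finset.univ.filter (fun A : Finset (ZMod m) => A.card = d)).image
      (shOrbit m)).filter (fun O => O.card = k)).card

open Finset Function

theorem Function.Semiconj.minimalPeriod_eq_of_injective {α β : Type*} {fa : α → α} {fb : β → β}
    {g : α → β} (hs : Semiconj g fa fb) (hg : Injective g) (x : α) :
    minimalPeriod fb (g x) = minimalPeriod fa x :=
  minimalPeriod_eq_minimalPeriod_iff.2 fun n =>
    ⟨fun h => hg ((hs.iterate_right n x).trans h), fun h => h.map hs⟩

section Shift

variable {m : ℕ}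

lemma mem_sh {A : Finset (ZMod m)} {x : ZMod m} : x ∈ sh m A ↔ x - 1 ∈ A := by
  simp only [sh, mem_image]
  exact ⟨fun ⟨a, ha, hax⟩ => by simpa [← hax] using ha, fun h => ⟨x - 1, h, sub_add_cancel x 1⟩⟩

lemma sh_iterate (i : ℕ) (A : Finset (ZMod m)) :
    (sh m)^[i] A = A.image (· + (i : ZMod m)) := by
  induction i with
  | zero => simp
  | succ i ih =>
    rw [iterate_succ_apply', ih, sh, image_image]
    congr 1
    funext x
    simp only [comp_apply, Nat.cast_succ]
    ring

lemma isPeriodicPt_sh (A : Finset (ZMod m)) : IsPeriodicPt (sh m) m A := by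
  simp [IsPeriodicPt, IsFixedPt, sh_iterate]

variable [NeZero m]

lemma mem_shOrbit {A C : Finset (ZMod m)} : C ∈ shOrbit m A ↔ ∃ i, (sh m)^[i] A = C := by
  simp only [shOrbit, mem_image, mem_range]
  exact ⟨fun ⟨i, _, h⟩ => ⟨i, h⟩, fun ⟨i, h⟩ =>
    ⟨i % m, Nat.mod_lt i (NeZero.pos m), ((isPeriodicPt_sh A).iterate_mod_apply i).trans h⟩⟩

lemma card_shOrbit (A : Finset (ZMod m)) : #(shOrbit m A) = minimalPeriod (sh m) A := by
  have horbit : shOrbit m A = (range (minimalPeriod (sh m) A)).image ((sh m)^[·] A) := by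
    ext C
    simp only [mem_shOrbit, mem_image, mem_range]
    exact ⟨fun ⟨i, h⟩ => ⟨_, Nat.mod_lt _ ((isPeriodicPt_sh A).minimalPeriod_pos (NeZero.pos m)),
      iterate_mod_minimalPeriod_eq.trans h⟩, fun ⟨i, _, h⟩ => ⟨i, h⟩⟩
  rw [horbit, card_image_of_injOn (by rw [coe_range]; exact iterate_injOn_Iio_minimalPeriod),
    card_range]

lemma norb_eq_card_image (d n : ℕ) :
    norb m d n =
      #(({A | #A = d ∧ minimalPeriod (sh m) A = n} : Finset (Finset (ZMod m))).image
        (shOrbit m)) := by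
  rw [norb, filter_image, filter_filter]
  simp only [card_shOrbit]

end Shift

section Pullback

variable {l k : ℕ} [NeZero l] (hkl : k ∣ l)

local notation "π" => ZMod.castHom hkl (ZMod k)

def castPreimage (B : Finset (ZMod k)) : Finset (ZMod l) := {x | π x ∈ B}

lemma mem_castPreimage {B : Finset (ZMod k)} {x : ZMod l} :
    x ∈ castPreimage hkl B ↔ π x ∈ B := by
  simp only [castPreimage, mem_filter, mem_univ, true_and]

lemma castPreimage_injective : Injective (castPreimage hkl) := by
  intro B B' h
  ext b
  obtain ⟨x, rfl⟩ := ZMod.castHom_surjective hkl b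
  rw [← mem_castPreimage, ← mem_castPreimage, h]

lemma semiconj_castPreimage_sh : Semiconj (castPreimage hkl) (sh k) (sh l) := by
  intro B
  ext x
  simp only [mem_castPreimage, mem_sh, map_sub, map_one]

lemma minimalPeriod_castPreimage (B : Finset (ZMod k)) :
    minimalPeriod (sh l) (castPreimage hkl B) = minimalPeriod (sh k) B :=
  (semiconj_castPreimage_sh hkl).minimalPeriod_eq_of_injective (castPreimage_injective hkl) B

lemma exists_eq_natCast_mul_of_castHom_eq_zero {y : ZMod l} (hy : π y = 0) :
    ∃ j : ℕ, y = ((k * j : ℕ) : ZMod l) := by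
  have hval : ((y.val : ℕ) : ZMod k) = 0 := by
    rwa [← map_natCast π, ZMod.natCast_zmod_val]
  obtain ⟨j, hj⟩ := (ZMod.natCast_eq_zero_iff _ _).1 hval
  exact ⟨j, by rw [← hj, ZMod.natCast_zmod_val]⟩

lemma exists_castPreimage_eq_of_isPeriodicPt {A : Finset (ZMod l)}
    (hA : IsPeriodicPt (sh l) k A) : ∃ B, castPreimage hkl B = A := by
  refine ⟨A.image π, ?_⟩
  ext x
  simp only [mem_castPreimage, mem_image]
  refine ⟨fun ⟨a, ha, hax⟩ => ?_, fun hx => ⟨x, hx, rfl⟩⟩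
  obtain ⟨j, hj⟩ := exists_eq_natCast_mul_of_castHom_eq_zero hkl
    (show π (x - a) = 0 by rw [map_sub, hax, sub_self])
  have hinv : A.image (· + ((k * j : ℕ) : ZMod l)) = A := by
    rw [← sh_iterate]
    exact hA.mul_const j
  rw [← hinv, mem_image]
  exact ⟨a, ha, by rw [← hj, add_sub_cancel]⟩

variable [NeZero k]

lemma shOrbit_castPreimage (B : Finset (ZMod k)) :
    shOrbit l (castPreimage hkl B) = (shOrbit k B).image (castPreimage hkl) := by
  ext C
  simp only [mem_shOrbit, mem_image, exists_exists_eq_and,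
    ((semiconj_castPreimage_sh hkl).iterate_right _ B).symm]

lemma card_castPreimage (B : Finset (ZMod k)) : #(castPreimage hkl B) = #B * (l / k) := by
  have hfiber : ∀ b : ZMod k, #{x : ZMod l | π x = b} = l / k := by
    intro b
    have hsum := sum_card_fiberwise_eq_card_filter (univ : Finset (ZMod l)) univ π
    simp only [fun c => AddMonoidHom.card_fiber_eq_of_mem_range π
      (ZMod.castHom_surjective hkl c) (ZMod.castHom_surjective hkl b), sum_const, card_univ,
      ZMod.card, mem_univ, filter_true, smul_eq_mul] at hsum
    exact (Nat.div_eq_of_eq_mul_left (NeZero.pos k) (by linarith)).symm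
  rw [castPreimage, ← sum_card_fiberwise_eq_card_filter, sum_congr rfl fun b _ => hfiber b,
    sum_const, smul_eq_mul]

lemma filter_card_minimalPeriod_eq_image_castPreimage {n : ℕ} (hn : n ∣ k) (t : ℕ) :
    ({A | #A = t * (l / k) ∧ minimalPeriod (sh l) A = n} : Finset (Finset (ZMod l))) =
      ({B | #B = t ∧ minimalPeriod (sh k) B = n} : Finset (Finset (ZMod k))).image
        (castPreimage hkl) := by
  have hlk : 0 < l / k := Nat.div_pos (Nat.le_of_dvd (NeZero.pos l) hkl) (NeZero.pos k)
  ext A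
  simp only [mem_filter, mem_univ, true_and, mem_image]
  constructor
  · rintro ⟨hcard, hper⟩
    obtain ⟨B, rfl⟩ := exists_castPreimage_eq_of_isPeriodicPt hkl
      (isPeriodicPt_iff_minimalPeriod_dvd.2 (hper ▸ hn))
    rw [card_castPreimage, Nat.mul_left_inj hlk.ne'] at hcard
    exact ⟨B, ⟨hcard, minimalPeriod_castPreimage hkl B ▸ hper⟩, rfl⟩
  · rintro ⟨B, ⟨hcard, hper⟩, rfl⟩
    exact ⟨by rw [card_castPreimage, hcard], by rw [minimalPeriod_castPreimage, hper]⟩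

end Pullback

theorem norb_mul_div_of_dvd {l k n : ℕ} [NeZero l] [NeZero k] (hkl : k ∣ l) (hn : n ∣ k) (t : ℕ) :
    norb l (t * (l / k)) n = norb k t n := by
  rw [norb_eq_card_image, norb_eq_card_image,
    filter_card_minimalPeriod_eq_image_castPreimage hkl hn, image_image,
    show shOrbit l ∘ castPreimage hkl = image (castPreimage hkl) ∘ shOrbit k from
      funext (shOrbit_castPreimage hkl),
    ← image_image, card_image_of_injective _ (image_injective (castPreimage_injective hkl))]

theorem norb_reduction_general (l d k : ℕ) [NeZero l] [NeZero k]
    (hkl : k ∣ l) (hld : l ∣ d * k) :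
    norb l d k = norb k (d * k / l) k := by
  have hsize : d * k / l * (l / k) = d := by
    rw [Nat.div_mul_div_comm hld hkl, mul_assoc, mul_comm k l,
      Nat.mul_div_cancel _ (Nat.mul_pos (NeZero.pos l) (NeZero.pos k))]
  rw [← norb_mul_div_of_dvd hkl dvd_rfl, hsize]

/-- Reduction lemma: the number of orbits of size exactly `k` on `d`-subsets of
`ZMod l` equals the number of orbits of size exactly `k` on `t`-subsets of
`ZMod k`, where `t = d * k / l`. -/
theorem norb_reduction (l d k : ℕ) [NeZero l] [NeZero k] (hd : 0 < d) (hk : 0 < k)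
    (hdl : d ≤ l) (hkl : k ∣ l) (hld : l ∣ d * k) :
    norb l d k = norb k (d * k / l) k :=
  norb_reduction_general l d k hkl hld
end

section
/- Let k, t be positive integers with t ≤ k, and let a be a common divisor of k and t. The number of t-element subsets A of ZMod k with 0 ∈ A that are invariant under translation by k/a (i.e., {x + k/a : x ∈ A} = A) equals the binomial coefficient C(k/a − 1, t/a − 1). -/
/-!
Translation by `g = k / a` generates the subgroup `⟨g⟩` of order `a`, and a finset is invariant
under it exactly when it is a union of cosets of `⟨g⟩`, i.e. the preimage of a finset of the
quotient, which has `k / a` elements. All cosets have `a` elements, so the invariant `t`-sets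
containing `0` correspond to the `(t / a)`-subsets of the quotient containing the class of `0`,
and there are `C(k/a - 1, t/a - 1)` of those.
-/

open Finset AddSubgroup

theorem card_filter_card_eq_and_mem {β : Type*} [Fintype β] [DecidableEq β] {s : ℕ} (hs : 0 < s)
    (b : β) : #{B : Finset β | B.card = s ∧ b ∈ B} = (Fintype.card β - 1).choose (s - 1) := by
  rw [← card_univ, ← card_erase_of_mem (mem_univ b), ← card_powersetCard]
  refine card_nbij' (·.erase b) (insert b) ?_ ?_ ?_ ?_
  · intro B hB
    simp only [coe_filter, mem_univ, true_and, Set.mem_ofPred_eq] at hB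
    simp [hB.1, card_erase_of_mem hB.2, erase_subset_erase]
  · intro C hC
    simp only [mem_coe, mem_powersetCard, subset_erase] at hC
    simp only [coe_filter, mem_univ, true_and, Set.mem_ofPred_eq, card_insert_of_notMem hC.1.2,
      hC.2, mem_insert, true_or, and_true]
    omega
  · intro B hB
    exact insert_erase (mem_filter.mp hB).2.2
  · intro C hC
    exact erase_insert fun h => by simpa using (mem_powersetCard.mp hC).1 h

section Saturated

variable {α β : Type*} [Fintype α] [DecidableEq β] {f : α → β} {m : ℕ}

theorem card_filter_apply_mem (hf : ∀ y, #{x | f x = y} = m) (B : Finset β) :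
    #{x | f x ∈ B} = m * B.card := by
  rw [← sum_card_fiberwise_eq_card_filter, sum_const_nat fun y _ => hf y, mul_comm]

theorem filter_apply_mem_image_eq [DecidableEq α] {A : Finset α}
    (hA : ∀ x y, f x = f y → x ∈ A → y ∈ A) : ({x | f x ∈ A.image f} : Finset α) = A := by
  ext y
  simp only [mem_filter, mem_univ, true_and, mem_image]
  exact ⟨fun ⟨x, hx, hxy⟩ => hA x y hxy hx, fun hy => ⟨y, hy, rfl⟩⟩

theorem card_saturated_eq_card [DecidableEq α] [Fintype β] (hf : ∀ y, #{x | f x = y} = m)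
    (hm : 0 < m) (s : ℕ) (x₀ : α) :
    #{A : Finset α | A.card = m * s ∧ x₀ ∈ A ∧ ∀ x y, f x = f y → x ∈ A → y ∈ A} =
      #{B : Finset β | B.card = s ∧ f x₀ ∈ B} := by
  have hsurj : Function.Surjective f := fun y => by
    obtain ⟨x, hx⟩ := card_pos.mp (hf y ▸ hm)
    exact ⟨x, (mem_filter.mp hx).2⟩
  refine card_nbij' (·.image f) (fun B => ({x | f x ∈ B} : Finset α)) ?_ ?_ ?_ ?_
  · intro A hA
    simp only [coe_filter, mem_univ, true_and, Set.mem_ofPred_eq] at hA ⊢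
    obtain ⟨hcard, hx₀, hsat⟩ := hA
    refine ⟨Nat.eq_of_mul_eq_mul_left hm ?_, mem_image_of_mem f hx₀⟩
    rw [← card_filter_apply_mem hf, filter_apply_mem_image_eq hsat, hcard]
  · intro B hB
    simp only [coe_filter, mem_univ, true_and, Set.mem_ofPred_eq] at hB ⊢
    refine ⟨by rw [card_filter_apply_mem hf, hB.1], by simpa using hB.2, fun x y hxy hx => ?_⟩
    simpa [← hxy] using hx
  · intro A hA
    exact filter_apply_mem_image_eq (mem_filter.mp hA).2.2.2
  · intro B _
    ext y
    simp only [mem_image, mem_filter, mem_univ, true_and]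
    refine ⟨fun ⟨x, hx, hxy⟩ => hxy ▸ hx, fun hy => ?_⟩
    obtain ⟨x, rfl⟩ := hsurj y
    exact ⟨x, hy, rfl⟩

end Saturated

theorem image_add_eq_self_iff {G : Type*} [AddGroup G] [DecidableEq G] (g : G) (A : Finset G) :
    A.image (· + g) = A ↔
      ∀ x y : G, (x : G ⧸ zmultiples g) = (y : G ⧸ zmultiples g) → x ∈ A → y ∈ A := by
  constructor
  · intro h
    have shift_mem_iff : ∀ x, x + g ∈ A ↔ x ∈ A := fun x => by
      conv_lhs => rw [← h]
      exact (add_left_injective g).mem_finset_image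
    have shift_zsmul_mem_iff : ∀ n : ℤ, ∀ x, x + n • g ∈ A ↔ x ∈ A := by
      intro n
      induction n using Int.induction_on with
      | zero => simp
      | succ n ih => intro x; rw [add_one_zsmul, ← add_assoc, shift_mem_iff, ih]
      | pred n ih => intro x; rw [← shift_mem_iff, add_assoc, ← add_one_zsmul, sub_add_cancel, ih]
    intro x y hxy hx
    obtain ⟨n, hn⟩ := mem_zmultiples_iff.mp (QuotientAddGroup.eq.mp hxy)
    rwa [← add_neg_cancel_left x y, ← hn, shift_zsmul_mem_iff]
  · intro h
    ext y
    simp only [mem_image]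
    refine ⟨fun ⟨x, hx, hxy⟩ => h x y ?_ hx,
      fun hy => ⟨y + -g, h y _ ?_ hy, neg_add_cancel_right y g⟩⟩
    · rw [QuotientAddGroup.eq, ← hxy, neg_add_cancel_left]; exact mem_zmultiples g
    · rw [QuotientAddGroup.eq, neg_add_cancel_left]; exact neg_mem (mem_zmultiples g)

theorem card_filter_mk_eq {G : Type*} [AddGroup G] [Fintype G] (H : AddSubgroup G)
    [DecidableEq (G ⧸ H)] (q : G ⧸ H) :
    #{x : G | (x : G ⧸ H) = q} = Nat.card H := by
  rw [← Nat.card_eq_finsetCard, ← mul_one (Nat.card H),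
    ← Nat.card_unique (α := ({q} : Set (G ⧸ H))), ← Nat.card_prod]
  exact Nat.card_congr <| (Equiv.subtypeEquivRight fun x => by simp).trans
    (QuotientAddGroup.preimageMkEquivAddSubgroupProdSet H {q})

theorem card_finset_image_add_eq_self {G : Type*} [AddGroup G] [Fintype G] [DecidableEq G]
    (g x₀ : G) {s : ℕ} (hs : 0 < s) :
    #{A : Finset G | A.card = addOrderOf g * s ∧ x₀ ∈ A ∧ A.image (· + g) = A} =
      (Fintype.card G / addOrderOf g - 1).choose (s - 1) := by
  classical
  have hfib (q : G ⧸ zmultiples g) : #{x : G | (x : G ⧸ zmultiples g) = q} = addOrderOf g := by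
    rw [card_filter_mk_eq, Nat.card_zmultiples]
  have hcard : Fintype.card G = addOrderOf g * Fintype.card (G ⧸ zmultiples g) := by
    simpa using card_filter_apply_mem hfib univ
  simp_rw [image_add_eq_self_iff]
  rw [card_saturated_eq_card hfib (addOrderOf_pos g) s x₀, card_filter_card_eq_and_mem hs, hcard,
    Nat.mul_div_cancel_left _ (addOrderOf_pos g)]

theorem card_invariant_subsets_general (k t a : ℕ) [NeZero k] (ht : 0 < t)
    (hak : a ∣ k) (hat : a ∣ t) :
    (Finset.univ.filter (fun A : Finset (ZMod k) =>
        A.card = t ∧ (0 : ZMod k) ∈ A ∧ A.image (· + ((k / a : ℕ) : ZMod k)) = A)).card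
      = Nat.choose (k / a - 1) (t / a - 1) := by
  have ha : 0 < a := Nat.pos_of_dvd_of_pos hak (NeZero.pos k)
  have horder : addOrderOf ((k / a : ℕ) : ZMod k) = a := by
    rw [ZMod.addOrderOf_coe _ (NeZero.ne k), Nat.gcd_eq_right (Nat.div_dvd_of_dvd hak),
      Nat.div_div_self hak (NeZero.ne k)]
  have := card_finset_image_add_eq_self ((k / a : ℕ) : ZMod k) 0
    (Nat.div_pos (Nat.le_of_dvd ht hat) ha)
  rwa [horder, Nat.mul_div_cancel' hat, ZMod.card] at this

/-- The number of `t`-element subsets of `ZMod k` containing `0` and invariant under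
translation by `k / a` is `C(k/a − 1, t/a − 1)`. -/
theorem card_invariant_subsets (k t a : ℕ) [NeZero k] (ht : 0 < t) (ha : 0 < a)
    (htk : t ≤ k) (hak : a ∣ k) (hat : a ∣ t) :
    (Finset.univ.filter (fun A : Finset (ZMod k) =>
        A.card = t ∧ (0 : ZMod k) ∈ A ∧ A.image (· + ((k / a : ℕ) : ZMod k)) = A)).card
      = Nat.choose (k / a - 1) (t / a - 1) :=
  card_invariant_subsets_general k t a ht hak hat
end

section
/- Let k, t, a be positive integers with t ≤ k, a dividing gcd(k, t). The map sending a subset A of ZMod k to its image under reduction modulo k/a gives a bijection between the set of t-element subsets A of ZMod k with 0 ∈ A invariant under translation by k/a, and the set of t/a-element subsets of ZMod (k/a) containing 0. -/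
/-!
Write `φ : ZMod k → ZMod m` for the reduction, `m = k / a`. Its kernel is generated by `m`, so a
set invariant under translation by `m` is a union of fibres of `φ`, i.e. `A = φ⁻¹ (φ A)`;
conversely every preimage `φ⁻¹ B` is invariant. All fibres of the surjective homomorphism `φ`
have `k / m = a` elements, so `#(φ⁻¹ B) = a * #B`. Hence `A ↦ φ A` and `B ↦ φ⁻¹ B` are mutually
inverse and match the cardinalities `t` and `t / a`.
-/

open Finset

theorem AddMonoidHom.card_filter_mem_eq_card_mul_card_ker {G H F : Type*} [AddGroup G]
    [Fintype G] [AddMonoid H] [DecidableEq H] [FunLike F G H] [AddMonoidHomClass F G H]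
    {f : F} (hf : Function.Surjective f) (B : Finset H) :
    #{x | f x ∈ B} = #B * #{x | f x = 0} := by
  rw [← sum_card_fiberwise_eq_card_filter]
  exact sum_const_nat fun b _ =>
    AddMonoidHom.card_fiber_eq_of_mem_range f (hf b) ⟨0, map_zero f⟩

theorem Finset.add_nsmul_mem_of_image_add_eq {M : Type*} [AddMonoid M] [DecidableEq M]
    {A : Finset M} {c : M} (hA : A.image (· + c) = A) {x : M} (hx : x ∈ A) (n : ℕ) :
    x + n • c ∈ A := by
  induction n with
  | zero => simpa using hx
  | succ n ih =>
    rw [succ_nsmul, ← add_assoc, ← hA]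
    exact mem_image_of_mem _ ih

theorem NeZero.of_dvd {k m : ℕ} [NeZero k] (h : m ∣ k) : NeZero m :=
  ⟨fun hm => NeZero.ne k (Nat.eq_zero_of_zero_dvd (hm ▸ h))⟩

namespace ZMod

variable {k m : ℕ} [NeZero k] (hdvd : m ∣ k)

def castPreimage (B : Finset (ZMod m)) : Finset (ZMod k) :=
  {x | castHom hdvd (ZMod m) x ∈ B}

@[simp]
theorem mem_castPreimage {B : Finset (ZMod m)} {x : ZMod k} :
    x ∈ castPreimage hdvd B ↔ castHom hdvd (ZMod m) x ∈ B := by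
  simp only [castPreimage, mem_filter, mem_univ, true_and]

theorem card_castPreimage (B : Finset (ZMod m)) :
    #(castPreimage hdvd B) = #B * (k / m) := by
  have := NeZero.of_dvd hdvd
  have hker := AddMonoidHom.card_filter_mem_eq_card_mul_card_ker
    (castHom_surjective hdvd) (univ : Finset (ZMod m))
  simp only [mem_univ, filter_true, card_univ, ZMod.card] at hker
  rw [castPreimage, AddMonoidHom.card_filter_mem_eq_card_mul_card_ker (castHom_surjective hdvd),
    Nat.div_eq_of_eq_mul_right (NeZero.pos m) hker]

theorem exists_eq_add_nsmul_of_castHom_eq {x y : ZMod k}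
    (hxy : castHom hdvd (ZMod m) x = castHom hdvd (ZMod m) y) :
    ∃ n : ℕ, y = x + n • (m : ZMod k) := by
  have hval : m ∣ (y - x).val := by
    rw [← natCast_eq_zero_iff, ← map_natCast (castHom hdvd (ZMod m)), natCast_zmod_val,
      map_sub, hxy, sub_self]
  obtain ⟨n, hn⟩ := hval
  refine ⟨n, ?_⟩
  rw [nsmul_eq_mul, ← Nat.cast_mul, mul_comm, ← hn, natCast_zmod_val, add_sub_cancel]

theorem castPreimage_image_eq_of_image_add_eq {A : Finset (ZMod k)}
    (hA : A.image (· + (m : ZMod k)) = A) :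
    castPreimage hdvd (A.image (castHom hdvd (ZMod m))) = A := by
  ext y
  simp only [mem_castPreimage, mem_image]
  constructor
  · rintro ⟨x, hx, hxy⟩
    obtain ⟨n, rfl⟩ := exists_eq_add_nsmul_of_castHom_eq hdvd hxy
    exact add_nsmul_mem_of_image_add_eq hA hx n
  · exact fun hy => ⟨y, hy, rfl⟩

theorem image_add_castPreimage (B : Finset (ZMod m)) :
    (castPreimage hdvd B).image (· + (m : ZMod k)) = castPreimage hdvd B := by
  refine eq_of_subset_of_card_le (fun y hy => ?_)
    (card_image_of_injective _ (add_left_injective (m : ZMod k))).ge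
  obtain ⟨x, hx, rfl⟩ := mem_image.mp hy
  simpa only [mem_castPreimage, map_add, map_natCast, natCast_self, add_zero] using hx

theorem image_castPreimage (B : Finset (ZMod m)) :
    (castPreimage hdvd B).image (castHom hdvd (ZMod m)) = B := by
  ext b
  simp only [mem_image, mem_castPreimage]
  refine ⟨fun ⟨x, hx, hxb⟩ => hxb ▸ hx, fun hb => ?_⟩
  obtain ⟨x, rfl⟩ := castHom_surjective hdvd b
  exact ⟨x, hb, rfl⟩

end ZMod

theorem bijOn_reduction_general (k t a : ℕ) [NeZero k]
    (hag : a ∣ Nat.gcd k t) (hdvd : k / a ∣ k) :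
    Set.BijOn
      (fun A : Finset (ZMod k) => A.image (ZMod.castHom hdvd (ZMod (k / a))))
      {A : Finset (ZMod k) | A.card = t ∧ (0 : ZMod k) ∈ A ∧
        A.image (· + ((k / a : ℕ) : ZMod k)) = A}
      {B : Finset (ZMod (k / a)) | B.card = t / a ∧ (0 : ZMod (k / a)) ∈ B} := by
  have hak : a ∣ k := hag.trans (Nat.gcd_dvd_left k t)
  have hat : a ∣ t := hag.trans (Nat.gcd_dvd_right k t)
  have hka : k / (k / a) = a := Nat.div_div_self hak (NeZero.ne k)
  have ha : 0 < a := Nat.pos_of_dvd_of_pos hak (NeZero.pos k)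
  refine Set.InvOn.bijOn (f' := ZMod.castPreimage hdvd)
    ⟨fun A hA => ZMod.castPreimage_image_eq_of_image_add_eq hdvd hA.2.2,
      fun B _ => ZMod.image_castPreimage hdvd B⟩ ?_ ?_
  · rintro A ⟨hcard, h0, hA⟩
    refine ⟨?_, mem_image.mpr ⟨0, h0, map_zero _⟩⟩
    have hcard_image := ZMod.card_castPreimage hdvd (A.image (ZMod.castHom hdvd (ZMod (k / a))))
    rw [ZMod.castPreimage_image_eq_of_image_add_eq hdvd hA, hcard, hka] at hcard_image
    rw [hcard_image, Nat.mul_div_cancel _ ha]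
  · rintro B ⟨hcard, h0⟩
    refine ⟨?_, by simpa using h0, ZMod.image_add_castPreimage hdvd B⟩
    rw [ZMod.card_castPreimage, hcard, hka, Nat.div_mul_cancel hat]

/-- Reduction modulo `k/a` gives a bijection between `t`-element subsets of `ZMod k`
containing `0` invariant under translation by `k/a`, and `t/a`-element subsets of
`ZMod (k/a)` containing `0`. -/
theorem bijOn_reduction (k t a : ℕ) [NeZero k] (ht : 0 < t) (ha : 0 < a) (htk : t ≤ k)
    (hag : a ∣ Nat.gcd k t) (hdvd : k / a ∣ k) :
    Set.BijOn
      (fun A : Finset (ZMod k) => A.image (ZMod.castHom hdvd (ZMod (k / a))))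
      {A : Finset (ZMod k) | A.card = t ∧ (0 : ZMod k) ∈ A ∧
        A.image (· + ((k / a : ℕ) : ZMod k)) = A}
      {B : Finset (ZMod (k / a)) | B.card = t / a ∧ (0 : ZMod (k / a)) ∈ B} :=
  bijOn_reduction_general k t a hag hdvd
end
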